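/- arXiv:1708.07401 — 8 statements merged into one kernel-verified Lean document; each statement's English description precedes it below -/
import Mathlib

section
/- Let d and m be positive integers, and for each j ∈ {1,…,m} let S_j ⊆ {1,…,d} and let φ_j : ℤ^d → ℤ^{S_j} be the coordinate projection that extracts the coordinates indexed by S_j and forgets the others. Let s ∈ [0,1]^m satisfy, for every i ∈ {1,…,d}, ∑_{j : i ∈ S_j} s_j ≥ 1. Then for every finite subset E ⊆ ℤ^d, |E| ≤ ∏_{j=1}^{m} |φ_j(E)|^{s_j}, where |φ_j(E)| denotes the cardinality of the image of E under φ_j. -/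
/-!
Induct on the coordinates along which `E` is allowed to vary. Slicing `E` by the value `t` of
a new coordinate `a`, the induction hypothesis bounds each slice. A projection `φ_j` with
`a ∉ S j` can only shrink on a slice, while for `a ∈ S j` the slices have disjoint
projections, so their sizes add up to `|φ_j(E)|`. Summing over `t`, the product over the
`j` with `a ∈ S j` is controlled by Hölder's inequality, which applies because their exponents
sum to at least `1`.
-/

open Finset

namespace Real

theorem sum_rpow_le_rpow_sum {ι : Type*} (s : Finset ι) {f : ι → ℝ} (hf : ∀ i ∈ s, 0 ≤ f i)
    {p : ℝ} (hp : 1 ≤ p) : ∑ i ∈ s, f i ^ p ≤ (∑ i ∈ s, f i) ^ p := by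
  classical
  induction s using Finset.induction_on with
  | empty => simp [zero_rpow (by linarith : p ≠ 0)]
  | insert a s ha ih =>
    have hs : ∀ i ∈ s, 0 ≤ f i := fun i hi => hf i (mem_insert_of_mem hi)
    rw [sum_insert ha, sum_insert ha]
    calc f a ^ p + ∑ i ∈ s, f i ^ p ≤ f a ^ p + (∑ i ∈ s, f i) ^ p := by gcongr; exact ih hs
      _ ≤ (f a + ∑ i ∈ s, f i) ^ p :=
        add_rpow_le_rpow_add (hf a (mem_insert_self a s)) (sum_nonneg hs) hp

/-- Hölder's inequality for several functions. -/
theorem sum_prod_rpow_le_prod_sum_rpow {ι κ : Type*} (J : Finset ι) (T : Finset κ)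
    {w : ι → ℝ} {b : ι → κ → ℝ} (hw : ∀ j ∈ J, 0 ≤ w j) (hw1 : ∑ j ∈ J, w j = 1)
    (hb : ∀ j ∈ J, ∀ t ∈ T, 0 < b j t) :
    ∑ t ∈ T, ∏ j ∈ J, b j t ^ w j ≤ ∏ j ∈ J, (∑ t ∈ T, b j t) ^ w j := by
  rcases T.eq_empty_or_nonempty with rfl | hT
  · simpa using prod_nonneg fun j _ => rpow_nonneg le_rfl (w j)
  set B : ι → ℝ := fun j => ∑ t ∈ T, b j t
  have hB : ∀ j ∈ J, 0 < B j := fun j hj => sum_pos (hb j hj) hT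
  have hPB : 0 ≤ ∏ j ∈ J, B j ^ w j := prod_nonneg fun j hj => rpow_nonneg (hB j hj).le _
  have hratio : ∀ j ∈ J, ∀ t ∈ T, 0 ≤ b j t / B j := fun j hj t ht =>
    div_nonneg (hb j hj t ht).le (hB j hj).le
  -- weighted AM-GM applied to the normalised values `b j t / B j`
  have amgm : ∀ t ∈ T, ∏ j ∈ J, b j t ^ w j
      ≤ (∑ j ∈ J, w j * (b j t / B j)) * ∏ j ∈ J, B j ^ w j := by
    intro t ht
    have hsplit :
        ∏ j ∈ J, b j t ^ w j = (∏ j ∈ J, (b j t / B j) ^ w j) * ∏ j ∈ J, B j ^ w j := by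
      rw [← prod_mul_distrib]
      refine prod_congr rfl fun j hj => ?_
      rw [← mul_rpow (hratio j hj t ht) (hB j hj).le, div_mul_cancel₀ _ (hB j hj).ne']
    rw [hsplit]
    gcongr
    exact geom_mean_le_arith_mean_weighted J w _ hw hw1 fun j hj => hratio j hj t ht
  have hmass : ∀ j ∈ J, ∑ t ∈ T, w j * (b j t / B j) = w j := fun j hj => by
    rw [← mul_sum, ← sum_div, div_self (hB j hj).ne', mul_one]
  calc ∑ t ∈ T, ∏ j ∈ J, b j t ^ w j
      ≤ ∑ t ∈ T, (∑ j ∈ J, w j * (b j t / B j)) * ∏ j ∈ J, B j ^ w j := sum_le_sum amgm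
    _ = ∏ j ∈ J, B j ^ w j := by rw [← sum_mul, sum_comm, sum_congr rfl hmass, hw1, one_mul]

theorem sum_prod_rpow_le_prod_sum_rpow_of_one_le_sum {ι κ : Type*} (J : Finset ι)
    (T : Finset κ) {s : ι → ℝ} {c : ι → κ → ℝ} (hs : ∀ j ∈ J, 0 ≤ s j)
    (hs1 : 1 ≤ ∑ j ∈ J, s j) (hc : ∀ j ∈ J, ∀ t ∈ T, 0 < c j t) :
    ∑ t ∈ T, ∏ j ∈ J, c j t ^ s j ≤ ∏ j ∈ J, (∑ t ∈ T, c j t) ^ s j := by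
  set σ := ∑ j ∈ J, s j
  have hσ : 0 < σ := one_pos.trans_le hs1
  -- write `c ^ s = (c ^ σ) ^ (s / σ)`, with weights `s / σ` summing to `1`
  have hpow : ∀ j ∈ J, ∀ x : ℝ, 0 ≤ x → x ^ s j = (x ^ σ) ^ (s j / σ) := fun j _ x hx => by
    rw [← rpow_mul hx, mul_div_cancel₀ _ hσ.ne']
  have hw1 : ∑ j ∈ J, s j / σ = 1 := by rw [← sum_div, div_self hσ.ne']
  calc ∑ t ∈ T, ∏ j ∈ J, c j t ^ s j
      = ∑ t ∈ T, ∏ j ∈ J, (c j t ^ σ) ^ (s j / σ) :=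
        sum_congr rfl fun t ht => prod_congr rfl fun j hj => hpow j hj _ (hc j hj t ht).le
    _ ≤ ∏ j ∈ J, (∑ t ∈ T, c j t ^ σ) ^ (s j / σ) :=
        sum_prod_rpow_le_prod_sum_rpow J T (fun j hj => div_nonneg (hs j hj) hσ.le) hw1
          fun j hj t ht => rpow_pos_of_pos (hc j hj t ht) σ
    _ ≤ ∏ j ∈ J, ((∑ t ∈ T, c j t) ^ σ) ^ (s j / σ) := by
        have hcj : ∀ j ∈ J, ∀ t ∈ T, 0 ≤ c j t := fun j hj t ht => (hc j hj t ht).le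
        have hsum : ∀ j ∈ J, 0 ≤ ∑ t ∈ T, c j t ^ σ := fun j hj =>
          sum_nonneg fun t ht => rpow_nonneg (hcj j hj t ht) σ
        refine prod_le_prod (fun j hj => rpow_nonneg (hsum j hj) _) fun j hj => ?_
        exact rpow_le_rpow (hsum j hj) (sum_rpow_le_rpow_sum T (hcj j hj) hs1)
          (div_nonneg (hs j hj) hσ.le)
    _ = ∏ j ∈ J, (∑ t ∈ T, c j t) ^ s j :=
        prod_congr rfl fun j hj => (hpow j hj _ (sum_nonneg fun t ht => (hc j hj t ht).le)).symm

-- The exponents of the `j ∈ J` are spent on Hölder's inequality, those of the other `j` on the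
-- bound `c j t ≤ C j`.
theorem sum_prod_rpow_le_prod_rpow_of_one_le_sum {ι κ : Type*} [Fintype ι] (J : Finset ι)
    (T : Finset κ) {s : ι → ℝ} {c : ι → κ → ℝ} {C : ι → ℝ} (hs : ∀ j, 0 ≤ s j)
    (hs1 : 1 ≤ ∑ j ∈ J, s j) (hc : ∀ j, ∀ t ∈ T, 0 < c j t) (hC : ∀ j, 0 ≤ C j)
    (hcC : ∀ j, ∀ t ∈ T, c j t ≤ C j) (hJ : ∀ j ∈ J, ∑ t ∈ T, c j t ≤ C j) :
    ∑ t ∈ T, ∏ j, c j t ^ s j ≤ ∏ j, C j ^ s j := by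
  classical
  have hc0 : ∀ j, ∀ t ∈ T, 0 ≤ c j t := fun j t ht => (hc j t ht).le
  calc ∑ t ∈ T, ∏ j, c j t ^ s j
      = ∑ t ∈ T, (∏ j ∈ J, c j t ^ s j) * ∏ j ∈ Jᶜ, c j t ^ s j := by
        simp only [prod_mul_prod_compl]
    _ ≤ ∑ t ∈ T, (∏ j ∈ J, c j t ^ s j) * ∏ j ∈ Jᶜ, C j ^ s j :=
        sum_le_sum fun t ht => mul_le_mul_of_nonneg_left
          (prod_le_prod (fun j _ => rpow_nonneg (hc0 j t ht) _)
            fun j _ => rpow_le_rpow (hc0 j t ht) (hcC j t ht) (hs j))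
          (prod_nonneg fun j _ => rpow_nonneg (hc0 j t ht) _)
    _ = (∑ t ∈ T, ∏ j ∈ J, c j t ^ s j) * ∏ j ∈ Jᶜ, C j ^ s j := by rw [sum_mul]
    _ ≤ (∏ j ∈ J, (∑ t ∈ T, c j t) ^ s j) * ∏ j ∈ Jᶜ, C j ^ s j :=
        mul_le_mul_of_nonneg_right
          (sum_prod_rpow_le_prod_sum_rpow_of_one_le_sum J T (fun j _ => hs j) hs1
            fun j _ => hc j)
          (prod_nonneg fun j _ => rpow_nonneg (hC j) _)
    _ ≤ (∏ j ∈ J, C j ^ s j) * ∏ j ∈ Jᶜ, C j ^ s j :=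
        mul_le_mul_of_nonneg_right
          (prod_le_prod (fun j _ => rpow_nonneg (sum_nonneg (hc0 j)) _)
            fun j hj => rpow_le_rpow (sum_nonneg (hc0 j)) (hJ j hj) (hs j))
          (prod_nonneg fun j _ => rpow_nonneg (hC j) _)
    _ = ∏ j, C j ^ s j := prod_mul_prod_compl J _

end Real

section Projections

variable {ι κ α : Type*} [DecidableEq α]

theorem Finset.card_image_restrict_eq_sum_card_image_restrict_fiber
    (E : Finset (ι → α)) {S : Finset ι} {a : ι} (ha : a ∈ S) :
    (E.image S.restrict).card =
      ∑ t ∈ E.image (· a), ((E.filter (· a = t)).image S.restrict).card := by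
  -- the `a`-coordinate can be read off the projection to `S`
  rw [card_eq_sum_card_fiberwise (f := fun u : S → α => u ⟨a, ha⟩) (t := E.image (· a))]
  · simp only [filter_image]
    rfl
  · rintro _ hu
    obtain ⟨x, hx, rfl⟩ := mem_image.mp hu
    exact mem_image_of_mem _ hx

variable [Fintype κ] (S : κ → Finset ι) {s : κ → ℝ}

theorem one_le_prod_card_image_restrict_rpow (hs : ∀ j, 0 ≤ s j) {E : Finset (ι → α)}
    (hE : E.Nonempty) : 1 ≤ ∏ j, ((E.image (S j).restrict).card : ℝ) ^ s j :=
  one_le_prod fun j _ => Real.one_le_rpow (by exact_mod_cast (hE.image _).card_pos) (hs j)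

variable [DecidableEq ι]

theorem card_le_prod_card_image_restrict_rpow_of_eq_off (hs : ∀ j, 0 ≤ s j) (A : Finset ι)
    (hcover : ∀ i ∈ A, 1 ≤ ∑ j ∈ univ.filter (fun j => i ∈ S j), s j)
    (E : Finset (ι → α)) (hE : ∀ x ∈ E, ∀ y ∈ E, ∀ i ∉ A, x i = y i) :
    (E.card : ℝ) ≤ ∏ j, ((E.image (S j).restrict).card : ℝ) ^ s j := by
  rcases E.eq_empty_or_nonempty with rfl | hne
  · simpa using prod_nonneg fun j _ => Real.rpow_nonneg le_rfl (s j)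
  induction A using Finset.induction_on generalizing E with
  | empty =>
    have hcard : E.card ≤ 1 := card_le_one.mpr fun x hx y hy =>
      funext fun i => hE x hx y hy i (notMem_empty i)
    exact (Nat.cast_le_one.mpr hcard).trans (one_le_prod_card_image_restrict_rpow S hs hne)
  | insert a A haA ih =>
    set T := E.image (· a)
    set F : α → Finset (ι → α) := fun t => E.filter (· a = t)
    have hF : ∀ t ∈ T, (F t).Nonempty := fun t ht => by
      obtain ⟨x, hx, rfl⟩ := mem_image.mp ht
      exact ⟨x, mem_filter.mpr ⟨hx, rfl⟩⟩
    have hslice : ∀ t ∈ T,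
        ((F t).card : ℝ) ≤ ∏ j, (((F t).image (S j).restrict).card : ℝ) ^ s j :=
      fun t ht => ih (fun i hi => hcover i (mem_insert_of_mem hi)) (F t)
        (fun x hx y hy i hi => by
          obtain ⟨hxE, rfl⟩ := mem_filter.mp hx
          obtain ⟨hyE, hya⟩ := mem_filter.mp hy
          by_cases hia : i = a
          · rw [hia, hya]
          · exact hE x hxE y hyE i (by simp [hia, hi]))
        (hF t ht)
    calc (E.card : ℝ) = ∑ t ∈ T, ((F t).card : ℝ) := by
          rw [card_eq_sum_card_fiberwise fun x hx => mem_image_of_mem (· a) hx]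
          push_cast; rfl
      _ ≤ ∑ t ∈ T, ∏ j, (((F t).image (S j).restrict).card : ℝ) ^ s j := sum_le_sum hslice
      _ ≤ ∏ j, ((E.image (S j).restrict).card : ℝ) ^ s j := by
          refine Real.sum_prod_rpow_le_prod_rpow_of_one_le_sum (univ.filter (a ∈ S ·)) T hs
            (hcover a (mem_insert_self a A))
            (fun j t ht => Nat.cast_pos.mpr ((hF t ht).image _).card_pos)
            (fun j => Nat.cast_nonneg _)
            (fun j t _ => by exact_mod_cast card_le_card (image_subset_image (filter_subset _ E)))
            fun j hj => ?_
          exact_mod_cast (card_image_restrict_eq_sum_card_image_restrict_fiber E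
            (mem_filter.mp hj).2).ge

end Projections

theorem stmt_0_general (d m : ℕ)
    (S : Fin m → Finset (Fin d))
    (s : Fin m → ℝ)
    (hs0 : ∀ j, 0 ≤ s j)
    (hcover : ∀ i : Fin d, 1 ≤ ∑ j ∈ Finset.univ.filter (fun j => i ∈ S j), s j)
    (E : Finset (Fin d → ℤ)) :
    (E.card : ℝ) ≤ ∏ j : Fin m,
      ((E.image (fun x (i : S j) => x i.val)).card : ℝ) ^ s j :=
  card_le_prod_card_image_restrict_rpow_of_eq_off S hs0 univ (fun i _ => hcover i) E
    fun _ _ _ _ i hi => absurd (mem_univ i) hi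

/-- Discrete Hölder–Brascamp–Lieb-type inequality (generalized Loomis–Whitney):
if the exponents `s j ∈ [0,1]` satisfy `∑_{j : i ∈ S j} s j ≥ 1` for every coordinate `i`,
then `|E| ≤ ∏ j |φ_j(E)|^{s j}` for every finite `E ⊆ ℤ^d`, where `φ_j` extracts
the coordinates indexed by `S j`. -/
theorem stmt_0 (d m : ℕ) (hd : 0 < d) (hm : 0 < m)
    (S : Fin m → Finset (Fin d))
    (s : Fin m → ℝ)
    (hs0 : ∀ j, 0 ≤ s j) (hs1 : ∀ j, s j ≤ 1)
    (hcover : ∀ i : Fin d, 1 ≤ ∑ j ∈ Finset.univ.filter (fun j => i ∈ S j), s j)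
    (E : Finset (Fin d → ℤ)) :
    (E.card : ℝ) ≤ ∏ j : Fin m,
      ((E.image (fun x (i : S j) => x i.val)).card : ℝ) ^ s j :=
  stmt_0_general d m S s hs0 hcover E
end

section
/- Let N ≥ 2 be an integer. Consider vectors s = (s_1,…,s_{N+1}) ∈ ℝ^{N+1} satisfying s ≥ 0, s_i + s_{N+1} ≥ 1 for every i ∈ {1,…,N}, and ∑_{i=1}^{N} s_i ≥ 1. Then every such s satisfies ∑_{i=1}^{N+1} s_i ≥ 2 − 1/N. Moreover, the vector s* with s*_i = 1/N for i ∈ {1,…,N} and s*_{N+1} = 1 − 1/N satisfies all the constraints and achieves ∑_{i=1}^{N+1} s*_i = 2 − 1/N; hence the minimum value of the linear program min ∑_i s_i over this feasible set equals 2 − 1/N. -/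
/-!
Weak duality with the dual certificate `y_i = 1/N` on each constraint `s_i + s_{N+1} ≥ 1` and
`1 - 1/N` on `∑ s_i ≥ 1`: these weights add up to exactly the objective `1ᵀs`, so every feasible
`s` has `1ᵀs ≥ N · (1/N) + (1 - 1/N) = 2 - 1/N`, and `s*` attains this value.
-/

/-- The optimal point of the MTTKRP linear program. -/
noncomputable def sStar (N : ℕ) : Fin (N + 1) → ℝ :=
  fun j => if j = Fin.last N then 1 - 1 / (N : ℝ) else 1 / (N : ℝ)

open Finset

theorem two_sub_inv_card_le_sum_add {ι : Type*} [Fintype ι] (s : ι → ℝ) (t : ℝ)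
    (hst : ∀ i, 1 ≤ s i + t) (hs : 1 ≤ ∑ i, s i) :
    2 - 1 / (Fintype.card ι : ℝ) ≤ ∑ i, s i + t := by
  set n : ℝ := (Fintype.card ι : ℝ)
  have hι : Nonempty ι := by
    by_contra h
    rw [not_nonempty_iff] at h
    norm_num at hs
  have hn : 1 ≤ n := by simp [n, Nat.one_le_iff_ne_zero, Fintype.card_ne_zero]
  have hpairs : n ≤ ∑ i, s i + n * t := by
    simpa [n, sum_add_distrib] using sum_le_sum fun i (_ : i ∈ univ) => hst i
  have hsum : n - 1 ≤ (n - 1) * ∑ i, s i := le_mul_of_one_le_right (by linarith) hs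
  have hcleared : 2 * n - 1 ≤ (∑ i, s i + t) * n := by linarith
  calc 2 - 1 / n = (2 * n - 1) / n := by field_simp
    _ ≤ ∑ i, s i + t := (div_le_iff₀ (by positivity)).mpr hcleared

variable {N : ℕ}

theorem two_sub_inv_le_sum_of_feasible (s : Fin (N + 1) → ℝ)
    (hpairs : ∀ i : Fin N, 1 ≤ s i.castSucc + s (Fin.last N))
    (hsum : 1 ≤ ∑ i : Fin N, s i.castSucc) :
    2 - 1 / (N : ℝ) ≤ ∑ j, s j := by
  simpa [Fin.sum_univ_castSucc] using two_sub_inv_card_le_sum_add _ _ hpairs hsum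

theorem sStar_castSucc (i : Fin N) : sStar N i.castSucc = 1 / N := by
  simp [sStar, (Fin.castSucc_lt_last i).ne]

theorem sStar_last : sStar N (Fin.last N) = 1 - 1 / N := by
  simp [sStar]

theorem sum_sStar_castSucc (hN : N ≠ 0) : ∑ i : Fin N, sStar N i.castSucc = 1 := by
  simp [sStar_castSucc, hN]

theorem sum_sStar (hN : N ≠ 0) : ∑ j, sStar N j = 2 - 1 / N := by
  rw [Fin.sum_univ_castSucc, sum_sStar_castSucc hN, sStar_last]
  ring

theorem sStar_nonneg (hN : N ≠ 0) (j : Fin (N + 1)) : 0 ≤ sStar N j := by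
  have : 1 / (N : ℝ) ≤ 1 := by
    rw [div_le_one₀ (by positivity)]
    exact_mod_cast Nat.one_le_iff_ne_zero.mpr hN
  unfold sStar
  split_ifs <;> first | linarith | positivity

theorem one_le_sStar_castSucc_add_last (i : Fin N) :
    1 ≤ sStar N i.castSucc + sStar N (Fin.last N) := by
  simp [sStar_castSucc, sStar_last]

/-- The linear program `min 1ᵀs` subject to `s ≥ 0`, `s_i + s_{N+1} ≥ 1` for `i ∈ [N]`,
and `∑_{i∈[N]} s_i ≥ 1` has minimum value `2 - 1/N`, attained at
`s* = (1/N,…,1/N,1-1/N)`. -/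
theorem stmt_1 (N : ℕ) (hN : 2 ≤ N) :
    (∀ s : Fin (N + 1) → ℝ,
        (∀ j, 0 ≤ s j) →
        (∀ i : Fin N, 1 ≤ s i.castSucc + s (Fin.last N)) →
        1 ≤ ∑ i : Fin N, s i.castSucc →
        2 - 1 / (N : ℝ) ≤ ∑ j, s j) ∧
    (∀ j, 0 ≤ sStar N j) ∧
    (∀ i : Fin N, 1 ≤ sStar N i.castSucc + sStar N (Fin.last N)) ∧
    (1 ≤ ∑ i : Fin N, sStar N i.castSucc) ∧
    (∑ j, sStar N j = 2 - 1 / (N : ℝ)) ∧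
    IsLeast {v : ℝ | ∃ s : Fin (N + 1) → ℝ,
        (∀ j, 0 ≤ s j) ∧
        (∀ i : Fin N, 1 ≤ s i.castSucc + s (Fin.last N)) ∧
        (1 ≤ ∑ i : Fin N, s i.castSucc) ∧
        v = ∑ j, s j}
      (2 - 1 / (N : ℝ)) := by
  have hN0 : N ≠ 0 := by omega
  have hsum := (sum_sStar_castSucc hN0).ge
  refine ⟨fun s _ => two_sub_inv_le_sum_of_feasible s, sStar_nonneg hN0,
    one_le_sStar_castSucc_add_last, hsum, sum_sStar hN0, ?_, ?_⟩
  · exact ⟨sStar N, sStar_nonneg hN0, one_le_sStar_castSucc_add_last, hsum, (sum_sStar hN0).symm⟩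
  · rintro _ ⟨s, -, hpairs, hs, rfl⟩
    exact two_sub_inv_le_sum_of_feasible s hpairs hs
end

section
/- Let N ≥ 2 be an integer and M > 0 a real number. If a finite set F ⊆ ℤ^{N+1} satisfies ∑_{j=1}^{N+1} |φ_j(F)| ≤ 3M, then |F| ≤ (3M)^{2−1/N} / N. -/
/-! The fibre of `φ_{N+1}` over `t` injects into the fibre of `φ_j` over `t_j` for every `j`, so
`|fibre t|^N ≤ ∏_j |φ_j-fibre over t_j|`; summing over `t` and expanding the product of sums gives
`∑_t |fibre t|^N ≤ ∏_j |φ_j(F)|`, and the power-mean inequality over the `|φ_{N+1}(F)|` fibres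
turns this into the discrete Hölder–Brascamp–Lieb bound
`|F|^N ≤ |φ_{N+1}(F)|^{N-1} ∏_j |φ_j(F)|`. With `S = 3M`, bound `|φ_{N+1}(F)| ≤ S` and, by AM-GM,
`∏_j |φ_j(F)| ≤ (S/N)^N`; the `N`-th root of `S^{N-1} (S/N)^N` is `S^{2-1/N}/N`. -/

open Finset

/-- MTTKRP factor-matrix projection: `φ_j(i_1,…,i_N,r) = (i_j, r)` for `j ∈ [N]`. -/
def phiMat (N : ℕ) (j : Fin N) : (Fin (N + 1) → ℤ) → ℤ × ℤ :=
  fun x => (x j.castSucc, x (Fin.last N))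

/-- MTTKRP tensor projection: `φ_{N+1}(i_1,…,i_N,r) = (i_1,…,i_N)`. -/
def phiTen (N : ℕ) : (Fin (N + 1) → ℤ) → (Fin N → ℤ) :=
  fun x i => x i.castSucc

theorem sum_prod_le_prod_sum_image {ι α R : Type*} [Fintype ι] [DecidableEq α]
    [CommSemiring R] [PartialOrder R] [IsOrderedRing R]
    (T : Finset (ι → α)) (d : ι → α → R) (hd : ∀ j v, 0 ≤ d j v) :
    ∑ t ∈ T, ∏ j, d j (t j) ≤ ∏ j, ∑ v ∈ T.image (· j), d j v := by
  classical
  rw [prod_univ_sum]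
  refine sum_le_sum_of_subset_of_nonneg (fun t ht ↦ ?_) fun _ _ _ ↦ prod_nonneg fun j _ ↦ hd _ _
  exact Fintype.mem_piFinset.2 fun j ↦ mem_image_of_mem _ ht

section Projections

variable {X ι α β : Type*} [Fintype ι] [DecidableEq α] [DecidableEq β]
  (F : Finset X) (t : X → ι → α) (r : X → β)

theorem card_filter_eq_le_card_filter_image
    (hinj : Set.InjOn (fun x ↦ (t x, r x)) F) (t₀ : ι → α) (j : ι) :
    #{x ∈ F | t x = t₀} ≤ #{p ∈ F.image (fun x ↦ (t x j, r x)) | p.1 = t₀ j} := by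
  refine card_le_card_of_injOn (fun x ↦ (t x j, r x)) (fun x hx ↦ ?_) fun x hx y hy hxy ↦ ?_
  · rw [mem_coe, mem_filter] at hx ⊢
    exact ⟨mem_image_of_mem _ hx.1, congrFun hx.2 j⟩
  · rw [mem_coe, mem_filter] at hx hy
    apply hinj hx.1 hy.1
    rw [Prod.mk.injEq]
    exact ⟨hx.2.trans hy.2.symm, congrArg Prod.snd hxy⟩

theorem card_image_eq_sum_card_filter (j : ι) :
    #(F.image fun x ↦ (t x j, r x)) =
      ∑ v ∈ (F.image t).image (· j), #{p ∈ F.image (fun x ↦ (t x j, r x)) | p.1 = v} := by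
  refine card_eq_sum_card_fiberwise fun p hp ↦ ?_
  obtain ⟨x, hx, rfl⟩ := mem_image.1 hp
  exact mem_image_of_mem _ (mem_image_of_mem t hx)

theorem card_pow_le_card_image_pow_mul_prod_card_image [Nonempty ι]
    (hinj : Set.InjOn (fun x ↦ (t x, r x)) F) :
    #F ^ Fintype.card ι ≤
      #(F.image t) ^ (Fintype.card ι - 1) * ∏ j, #(F.image fun x ↦ (t x j, r x)) := by
  classical
  let n := Fintype.card ι
  have hn : n - 1 + 1 = n := Nat.sub_add_cancel Fintype.card_pos
  set fiber : (ι → α) → ℕ := fun t₀ ↦ #{x ∈ F | t x = t₀}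
  have hF : #F = ∑ t₀ ∈ F.image t, fiber t₀ :=
    card_eq_sum_card_fiberwise fun x hx ↦ mem_image_of_mem t hx
  have hfibers : ∑ t₀ ∈ F.image t, fiber t₀ ^ n ≤ ∏ j, #(F.image fun x ↦ (t x j, r x)) :=
    calc ∑ t₀ ∈ F.image t, fiber t₀ ^ n
        ≤ ∑ t₀ ∈ F.image t, ∏ j, #{p ∈ F.image (fun x ↦ (t x j, r x)) | p.1 = t₀ j} := by
          refine sum_le_sum fun t₀ _ ↦ ?_
          rw [show fiber t₀ ^ n = ∏ _j : ι, fiber t₀ by rw [prod_const, card_univ]]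
          exact prod_le_prod' fun j _ ↦ card_filter_eq_le_card_filter_image F t r hinj t₀ j
      _ ≤ _ := (sum_prod_le_prod_sum_image _ _ fun _ _ ↦ Nat.zero_le _).trans_eq
          (prod_congr rfl fun j _ ↦ (card_image_eq_sum_card_filter F t r j).symm)
  calc #F ^ n = (∑ t₀ ∈ F.image t, fiber t₀) ^ (n - 1 + 1) := by rw [hF, hn]
    _ ≤ #(F.image t) ^ (n - 1) * ∑ t₀ ∈ F.image t, fiber t₀ ^ (n - 1 + 1) :=
        pow_sum_le_card_mul_sum_pow (fun _ _ ↦ Nat.zero_le _) _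
    _ ≤ _ := by rw [hn]; exact Nat.mul_le_mul_left _ hfibers

end Projections

theorem card_pow_le_card_image_phiTen_pow_mul_prod (N : ℕ) [NeZero N]
    (F : Finset (Fin (N + 1) → ℤ)) :
    #F ^ N ≤ #(F.image (phiTen N)) ^ (N - 1) * ∏ j, #(F.image (phiMat N j)) := by
  have hinj : Set.InjOn (fun x ↦ (phiTen N x, x (Fin.last N))) F := fun x _ y _ hxy ↦ by
    rw [← Fin.snoc_init_self x, ← Fin.snoc_init_self y]
    exact congrArg₂ Fin.snoc (congrArg Prod.fst hxy) (congrArg Prod.snd hxy)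
  have := card_pow_le_card_image_pow_mul_prod_card_image F (phiTen N) _ hinj
  rwa [Fintype.card_fin] at this

theorem prod_le_sum_div_card_pow {ι : Type*} (s : Finset ι) (z : ι → ℝ)
    (hz : ∀ i ∈ s, 0 ≤ z i) : ∏ i ∈ s, z i ≤ ((∑ i ∈ s, z i) / #s) ^ #s := by
  rcases s.eq_empty_or_nonempty with rfl | hs
  · simp
  have hcard : (#s : ℝ) ≠ 0 := Nat.cast_ne_zero.2 hs.card_pos.ne'
  have amgm := Real.geom_mean_le_arith_mean_weighted s (fun _ ↦ (#s : ℝ)⁻¹) z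
    (fun _ _ ↦ by positivity) (by simp [hcard]) hz
  rw [Real.finsetProd_rpow s z hz, ← mul_sum, inv_mul_eq_div] at amgm
  calc ∏ i ∈ s, z i = ((∏ i ∈ s, z i) ^ (#s : ℝ)⁻¹) ^ #s :=
        (Real.rpow_inv_natCast_pow (prod_nonneg hz) hs.card_pos.ne').symm
    _ ≤ _ := pow_le_pow_left₀ (Real.rpow_nonneg (prod_nonneg hz) _) amgm _

theorem le_rpow_two_sub_inv_div_of_pow_le {n : ℕ} (hn : n ≠ 0) {x S : ℝ} (hS : 0 ≤ S)
    (h : x ^ n ≤ S ^ (n - 1) * (S / n) ^ n) : x ≤ S ^ (2 - 1 / (n : ℝ)) / n := by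
  refine le_of_pow_le_pow_left₀ hn (by positivity) (h.trans_eq ?_)
  have hexp : (2 - 1 / (n : ℝ)) * n = ((n - 1 + n : ℕ) : ℝ) := by
    rw [Nat.cast_add, Nat.cast_sub (Nat.one_le_iff_ne_zero.2 hn)]
    field_simp
    ring
  rw [div_pow, div_pow, ← Real.rpow_natCast (S ^ _), ← Real.rpow_mul hS, hexp,
    Real.rpow_natCast, pow_add, mul_div_assoc]

theorem le_rpow_two_sub_inv_div_of_pow_le_pow_mul_prod {n : ℕ} (hn : n ≠ 0) {x a S : ℝ}
    (b : Fin n → ℝ) (ha : 0 ≤ a) (hb : ∀ j, 0 ≤ b j) (hS : a + ∑ j, b j ≤ S)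
    (h : x ^ n ≤ a ^ (n - 1) * ∏ j, b j) : x ≤ S ^ (2 - 1 / (n : ℝ)) / n := by
  have hb_sum : 0 ≤ ∑ j, b j := sum_nonneg fun j _ ↦ hb j
  have hS0 : 0 ≤ S := by linarith
  have hamgm : ∏ j, b j ≤ ((∑ j, b j) / n) ^ n := by
    simpa using prod_le_sum_div_card_pow univ b fun j _ ↦ hb j
  refine le_rpow_two_sub_inv_div_of_pow_le hn hS0 (h.trans ?_)
  calc a ^ (n - 1) * ∏ j, b j ≤ S ^ (n - 1) * ((∑ j, b j) / n) ^ n :=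
        mul_le_mul (pow_le_pow_left₀ ha (by linarith) _) hamgm
          (prod_nonneg fun j _ ↦ hb j) (pow_nonneg hS0 _)
    _ ≤ S ^ (n - 1) * (S / n) ^ n := by
        gcongr
        linarith

theorem stmt_6_general (N : ℕ) (hN : 2 ≤ N) (M : ℝ)
    (F : Finset (Fin (N + 1) → ℤ))
    (h : ((F.image (phiTen N)).card : ℝ)
        + ∑ j : Fin N, ((F.image (phiMat N j)).card : ℝ) ≤ 3 * M) :
    (F.card : ℝ) ≤ (3 * M) ^ (2 - 1 / (N : ℝ)) / N := by
  have : NeZero N := ⟨by omega⟩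
  refine le_rpow_two_sub_inv_div_of_pow_le_pow_mul_prod (NeZero.ne N) _ (Nat.cast_nonneg _)
    (fun _ ↦ Nat.cast_nonneg _) h ?_
  exact_mod_cast card_pow_le_card_image_phiTen_pow_mul_prod N F

/-- Per-segment bound: if the total number of array entries accessed,
`∑_{j=1}^{N+1} |φ_j(F)|`, is at most `3M`, then `|F| ≤ (3M)^{2-1/N}/N`. -/
theorem stmt_6 (N : ℕ) (hN : 2 ≤ N) (M : ℝ) (hM : 0 < M)
    (F : Finset (Fin (N + 1) → ℤ))
    (h : ((F.image (phiTen N)).card : ℝ)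
        + ∑ j : Fin N, ((F.image (phiMat N j)).card : ℝ) ≤ 3 * M) :
    (F.card : ℝ) ≤ (3 * M) ^ (2 - 1 / (N : ℝ)) / N :=
  stmt_6_general N hN M F h
end

section
/- Let N ≥ 2 be an integer. For every finite set F ⊆ ℤ^{N+1}, it holds that ∑_{j=1}^{N+1} |φ_j(F)| ≥ (2 − 1/N) · (N·|F|)^{N/(2N−1)}. -/
/-! Slice `F` by the last coordinate `r`. On a slice `F_r`, `φ_{N+1}` is injective and `F_r`
lies in the box `∏ j, φ_j(F_r)`, so AM–GM gives `N |F_r| ≤ T^{1-1/N} ∑ j, |φ_j(F_r)|` with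
`T = |φ_{N+1}(F)|`. For fixed `j` the images `φ_j(F_r)` are disjoint (their second coordinate
is `r`), so summing over `r` yields `N |F| ≤ T^{1-1/N} S` with `S = ∑ j, |φ_j(F)|`. Weighted
AM–GM with weights `(N-1)/(2N-1) ≤ N/(2N-1)` converts this product bound into the bound on
`T + S`. -/

open Finset

namespace Finset

section Pi

variable {ι α : Type*} [Fintype ι] [DecidableEq ι] [DecidableEq α]

theorem card_le_prod_card_image_eval (s : Finset (ι → α)) :
    #s ≤ ∏ i, #(s.image (· i)) :=
  calc #s ≤ #(Fintype.piFinset fun i => s.image (· i)) :=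
        card_le_card fun _ hx => Fintype.mem_piFinset.2 fun _ => mem_image_of_mem _ hx
    _ = ∏ i, #(s.image (· i)) := Fintype.card_piFinset _

theorem card_mul_le_rpow_mul_sum_card_image_eval [Nonempty ι] (s : Finset (ι → α)) :
    (Fintype.card ι : ℝ) * #s ≤
      (#s : ℝ) ^ (((Fintype.card ι : ℝ) - 1) / Fintype.card ι) *
        ∑ i, (#(s.image (· i)) : ℝ) := by
  set n : ℝ := (Fintype.card ι : ℝ)
  have hn : 0 < n := by simp [n, Fintype.card_pos]
  have hbox : (#s : ℝ) ^ n⁻¹ ≤ (∑ i, (#(s.image (· i)) : ℝ)) / n := by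
    have hamgm := Real.geom_mean_le_arith_mean univ (fun _ => 1)
      (fun i => (#(s.image (· i)) : ℝ)) (fun _ _ => zero_le_one) (by simp [Fintype.card_pos])
      (fun _ _ => Nat.cast_nonneg _)
    simp only [Real.rpow_one, sum_const, card_univ, nsmul_eq_mul, mul_one, one_mul] at hamgm
    calc (#s : ℝ) ^ n⁻¹ ≤ (∏ i, (#(s.image (· i)) : ℝ)) ^ n⁻¹ := by
          gcongr; exact_mod_cast s.card_le_prod_card_image_eval
      _ ≤ (∑ i, (#(s.image (· i)) : ℝ)) / n := hamgm
  have hsplit : (n - 1) / n + n⁻¹ = 1 := by field_simp; ring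
  calc n * #s = n * ((#s : ℝ) ^ ((n - 1) / n) * (#s : ℝ) ^ n⁻¹) := by
        rw [← Real.rpow_add' (Nat.cast_nonneg _) (by rw [hsplit]; exact one_ne_zero), hsplit,
          Real.rpow_one]
    _ ≤ n * ((#s : ℝ) ^ ((n - 1) / n) * ((∑ i, (#(s.image (· i)) : ℝ)) / n)) := by gcongr
    _ = (#s : ℝ) ^ ((n - 1) / n) * ∑ i, (#(s.image (· i)) : ℝ) := by field_simp

end Pi

theorem card_image_prodMk_eq_sum_card_image_fiber {β γ δ : Type*} [DecidableEq γ]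
    [DecidableEq δ] (s : Finset β) (f : β → γ) (g : β → δ) :
    #(s.image fun x => (f x, g x)) = ∑ r ∈ s.image g, #((s.filter (g · = r)).image f) := by
  rw [card_eq_sum_card_fiberwise (f := Prod.snd) fun p hp => by
    obtain ⟨x, hx, rfl⟩ := mem_image.1 hp; exact mem_image_of_mem g hx]
  refine sum_congr rfl fun r _ => ?_
  have hfiber : (s.filter (g · = r)).image (fun x => (f x, g x)) =
      ((s.filter (g · = r)).image f).image (·, r) := by
    rw [image_image]
    exact image_congr fun x hx => by simp [(mem_filter.1 (mem_coe.1 hx)).2]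
  rw [filter_image, hfiber, card_image_of_injective _ (Prod.mk_left_injective r)]

end Finset

theorem two_sub_inv_mul_rpow_le_add {n A T S : ℝ} (hn : 1 ≤ n) (hA : 0 ≤ A) (hT : 0 ≤ T)
    (hS : 0 ≤ S) (h : A ≤ T ^ ((n - 1) / n) * S) :
    (2 - 1 / n) * A ^ (n / (2 * n - 1)) ≤ T + S := by
  set w₁ := (n - 1) / (2 * n - 1) with hw₁_def
  set w₂ := n / (2 * n - 1) with hw₂_def
  have hd : 0 < 2 * n - 1 := by linarith
  have hw₁ : 0 ≤ w₁ := div_nonneg (by linarith) hd.le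
  have hw₂ : 0 < w₂ := div_pos (by linarith) hd
  have hw₁₂ : w₁ ≤ w₂ := div_le_div_of_nonneg_right (by linarith) hd.le
  have hpow : A ^ w₂ ≤ T ^ w₁ * S ^ w₂ :=
    calc A ^ w₂ ≤ (T ^ ((n - 1) / n) * S) ^ w₂ := by gcongr
      _ = T ^ w₁ * S ^ w₂ := by
        rw [Real.mul_rpow (by positivity) hS, ← Real.rpow_mul hT]
        congr 2
        rw [hw₁_def, hw₂_def]
        field_simp
  have hamgm : T ^ w₁ * S ^ w₂ ≤ w₁ * T + w₂ * S :=
    Real.geom_mean_le_arith_mean2_weighted hw₁ hw₂.le hT hS <| by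
      rw [hw₁_def, hw₂_def, ← add_div, div_eq_one_iff_eq hd.ne']; ring
  calc (2 - 1 / n) * A ^ w₂ = A ^ w₂ / w₂ := by rw [hw₂_def]; field_simp
    _ ≤ (w₂ * T + w₂ * S) / w₂ := by
      gcongr; linarith [mul_le_mul_of_nonneg_right hw₁₂ hT]
    _ = T + S := by field_simp

section MTTKRP

variable {N : ℕ} (F : Finset (Fin (N + 1) → ℤ))

theorem card_image_phiTen_slice (r : ℤ) :
    #((F.filter (· (Fin.last N) = r)).image (phiTen N)) = #(F.filter (· (Fin.last N) = r)) := by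
  refine card_image_of_injOn fun x hx y hy hxy => funext fun i => ?_
  induction i using Fin.lastCases with
  | last => rw [(mem_filter.1 hx).2, (mem_filter.1 hy).2]
  | cast j => exact congrFun hxy j

theorem natCast_mul_card_slice_le (hN : 1 ≤ N) (r : ℤ) :
    (N : ℝ) * #(F.filter (· (Fin.last N) = r)) ≤
      (#(F.image (phiTen N)) : ℝ) ^ (((N : ℝ) - 1) / N) *
        ∑ j : Fin N, (#((F.filter (· (Fin.last N) = r)).image (· j.castSucc)) : ℝ) := by
  have : Nonempty (Fin N) := Fin.pos_iff_nonempty.1 hN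
  have hslice :=
    ((F.filter (· (Fin.last N) = r)).image (phiTen N)).card_mul_le_rpow_mul_sum_card_image_eval
  simp only [Fintype.card_fin, image_image, card_image_phiTen_slice] at hslice
  have hsub : #(F.filter (· (Fin.last N) = r)) ≤ #(F.image (phiTen N)) :=
    card_image_phiTen_slice F r ▸ card_le_card (image_subset_image (filter_subset _ F))
  have hexp : 0 ≤ ((N : ℝ) - 1) / N :=
    div_nonneg (sub_nonneg.2 (by exact_mod_cast hN)) N.cast_nonneg
  refine hslice.trans (mul_le_mul_of_nonneg_right ?_ (by positivity))
  gcongr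

theorem sum_card_slice_image_eq (j : Fin N) :
    ∑ r ∈ F.image (· (Fin.last N)), #((F.filter (· (Fin.last N) = r)).image (· j.castSucc)) =
      #(F.image (phiMat N j)) :=
  (F.card_image_prodMk_eq_sum_card_image_fiber _ _).symm

theorem natCast_mul_card_le_rpow_mul_sum_card_image_phiMat (hN : 1 ≤ N) :
    (N : ℝ) * #F ≤ (#(F.image (phiTen N)) : ℝ) ^ (((N : ℝ) - 1) / N) *
      ∑ j : Fin N, (#(F.image (phiMat N j)) : ℝ) := by
  rw [card_eq_sum_card_fiberwise (f := (· (Fin.last N))) fun x hx => mem_image_of_mem _ hx]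
  push_cast
  rw [mul_sum]
  refine (sum_le_sum fun r _ => natCast_mul_card_slice_le F hN r).trans_eq ?_
  rw [← mul_sum, sum_comm]
  congr 1
  refine sum_congr rfl fun j _ => ?_
  rw [← sum_card_slice_image_eq F j, Nat.cast_sum]

end MTTKRP

/-- Memory-independent projection bound:
`∑_{j=1}^{N+1} |φ_j(F)| ≥ (2 - 1/N) (N|F|)^{N/(2N-1)}`. -/
theorem stmt_7 (N : ℕ) (hN : 2 ≤ N) (F : Finset (Fin (N + 1) → ℤ)) :
    (2 - 1 / (N : ℝ)) * ((N : ℝ) * F.card) ^ ((N : ℝ) / (2 * N - 1))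
      ≤ ((F.image (phiTen N)).card : ℝ)
        + ∑ j : Fin N, ((F.image (phiMat N j)).card : ℝ) :=
  two_sub_inv_mul_rpow_le_add (by exact_mod_cast hN.trans' one_le_two) (by positivity)
    (Nat.cast_nonneg _) (sum_nonneg fun _ _ => Nat.cast_nonneg _)
    (natCast_mul_card_le_rpow_mul_sum_card_image_phiMat F (hN.trans' one_le_two))
end

section
/- Let N ≥ 2 be an integer and T > 0 a real number. If a finite set F ⊆ ℤ^{N+1} satisfies |φ_{N+1}(F)| ≤ T, then ∏_{j=1}^{N} |φ_j(F)| ≥ |F|^N / T^{N−1}. -/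
open Finset MeasureTheory

theorem Finset.sum_prod_rpow_le_prod_sum_rpow {ι κ : Type*} (s : Finset ι) (t : Finset κ)
    (f : κ → ι → ℝ) (hf : ∀ k i, 0 ≤ f k i) {p : κ → ℝ} (hp : ∑ k ∈ t, p k = 1)
    (hp0 : ∀ k ∈ t, 0 ≤ p k) :
    ∑ i ∈ s, ∏ k ∈ t, f k i ^ p k ≤ ∏ k ∈ t, (∑ i ∈ s, f k i) ^ p k := by
  -- Hölder for lintegrals against the counting measure on `s`.
  let : MeasurableSpace ι := ⊤
  have key := ENNReal.lintegral_prod_norm_pow_le (μ := Measure.count.restrict ↑s) t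
    (f := fun k i => ENNReal.ofReal (f k i)) (fun _ _ => .of_discrete) hp hp0
  simp only [lintegral_finset, Measure.count_singleton, mul_one] at key
  have hpow {k} (hk : k ∈ t) {x : ℝ} (hx : 0 ≤ x) :
      ENNReal.ofReal x ^ p k = .ofReal (x ^ p k) :=
    ENNReal.ofReal_rpow_of_nonneg hx (hp0 k hk)
  have hsum (k) : 0 ≤ ∑ i ∈ s, f k i := sum_nonneg fun i _ => hf k i
  have hlhs : ∑ i ∈ s, ∏ k ∈ t, ENNReal.ofReal (f k i) ^ p k
      = .ofReal (∑ i ∈ s, ∏ k ∈ t, f k i ^ p k) := by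
    rw [ENNReal.ofReal_sum_of_nonneg fun i _ =>
      prod_nonneg fun k _ => Real.rpow_nonneg (hf k i) _]
    refine sum_congr rfl fun i _ => ?_
    rw [ENNReal.ofReal_prod_of_nonneg fun k _ => Real.rpow_nonneg (hf k i) _]
    exact prod_congr rfl fun k hk => hpow hk (hf k i)
  have hrhs : ∏ k ∈ t, (∑ i ∈ s, ENNReal.ofReal (f k i)) ^ p k
      = .ofReal (∏ k ∈ t, (∑ i ∈ s, f k i) ^ p k) := by
    rw [ENNReal.ofReal_prod_of_nonneg fun k _ => Real.rpow_nonneg (hsum k) _]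
    refine prod_congr rfl fun k hk => ?_
    rw [← ENNReal.ofReal_sum_of_nonneg fun i _ => hf k i, hpow hk (hsum k)]
  rwa [hlhs, hrhs, ENNReal.ofReal_le_ofReal_iff
    (prod_nonneg fun k _ => Real.rpow_nonneg (hsum k) _)] at key

theorem le_rpow_one_sub_inv_mul_prod_rpow_inv {N : ℕ} (hN : 0 < N) {b T : ℝ}
    (a : Fin N → ℝ) (hb : 0 ≤ b) (ha : ∀ j, 0 ≤ a j) (hbT : b ≤ T) (hba : b ≤ ∏ j, a j) :
    b ≤ T ^ (1 - (N : ℝ)⁻¹) * ∏ j, a j ^ (N : ℝ)⁻¹ := by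
  have hw : 0 ≤ 1 - (N : ℝ)⁻¹ := sub_nonneg.2 (inv_le_one_of_one_le₀ (by exact_mod_cast hN))
  calc b = b ^ (1 - (N : ℝ)⁻¹) * b ^ (N : ℝ)⁻¹ := by
        rw [← Real.rpow_add' hb (by simp), sub_add_cancel, Real.rpow_one]
    _ ≤ T ^ (1 - (N : ℝ)⁻¹) * (∏ j, a j) ^ (N : ℝ)⁻¹ := by
        gcongr
        exact Real.rpow_nonneg (hb.trans hbT) _
    _ = T ^ (1 - (N : ℝ)⁻¹) * ∏ j, a j ^ (N : ℝ)⁻¹ := by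
        rw [Real.finsetProd_rpow _ _ fun j _ => ha j]

theorem sum_pow_le_prod_sum_mul_rpow {ι : Type*} (R : Finset ι) {N : ℕ} (hN : 0 < N)
    {T : ℝ} (hT : 0 ≤ T) (b : ι → ℝ) (a : Fin N → ι → ℝ) (hb : ∀ r, 0 ≤ b r)
    (ha : ∀ j r, 0 ≤ a j r) (hbT : ∀ r ∈ R, b r ≤ T) (hba : ∀ r ∈ R, b r ≤ ∏ j, a j r) :
    (∑ r ∈ R, b r) ^ N ≤ (∏ j, ∑ r ∈ R, a j r) * T ^ ((N : ℝ) - 1) := by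
  have hsum : ∑ r ∈ R, b r ≤ T ^ (1 - (N : ℝ)⁻¹) * ∏ j, (∑ r ∈ R, a j r) ^ (N : ℝ)⁻¹ :=
    calc ∑ r ∈ R, b r
      _ ≤ ∑ r ∈ R, T ^ (1 - (N : ℝ)⁻¹) * ∏ j, a j r ^ (N : ℝ)⁻¹ :=
        sum_le_sum fun r hr => le_rpow_one_sub_inv_mul_prod_rpow_inv hN _ (hb r)
          (fun j => ha j r) (hbT r hr) (hba r hr)
      _ ≤ T ^ (1 - (N : ℝ)⁻¹) * ∏ j, (∑ r ∈ R, a j r) ^ (N : ℝ)⁻¹ := by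
        rw [← mul_sum]
        gcongr
        refine sum_prod_rpow_le_prod_sum_rpow R univ a ha ?_ fun _ _ => by positivity
        simp [hN.ne']
  calc (∑ r ∈ R, b r) ^ N
    _ ≤ (T ^ (1 - (N : ℝ)⁻¹) * ∏ j, (∑ r ∈ R, a j r) ^ (N : ℝ)⁻¹) ^ N :=
      pow_le_pow_left₀ (sum_nonneg fun r _ => hb r) hsum N
    _ = (∏ j, ∑ r ∈ R, a j r) * T ^ ((N : ℝ) - 1) := by
      rw [mul_pow, ← prod_pow, ← Real.rpow_mul_natCast hT, mul_comm]
      congr 1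
      · exact prod_congr rfl fun j _ =>
          Real.rpow_inv_natCast_pow (sum_nonneg fun r _ => ha j r) hN.ne'
      · congr 1
        field_simp

namespace MTTKRP

variable {N : ℕ}

def slice (F : Finset (Fin (N + 1) → ℤ)) (r : ℤ) : Finset (Fin (N + 1) → ℤ) :=
  F.filter (· (Fin.last N) = r)

variable (F : Finset (Fin (N + 1) → ℤ))

theorem injOn_phiTen_slice (r : ℤ) : Set.InjOn (phiTen N) (slice F r) := by
  intro x hx y hy hxy
  simp only [slice, coe_filter, Set.mem_ofPred_eq] at hx hy
  funext i
  induction i using Fin.lastCases with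
  | last => rw [hx.2, hy.2]
  | cast i => exact congrFun hxy i

theorem card_slice_le_card_image_phiTen (r : ℤ) :
    (slice F r).card ≤ (F.image (phiTen N)).card :=
  card_le_card_of_injOn _ (fun _ hx => mem_image_of_mem _ (mem_filter.1 hx).1)
    (injOn_phiTen_slice F r)

theorem card_slice_le_prod_card_image (r : ℤ) :
    (slice F r).card ≤ ∏ j : Fin N, ((slice F r).image (· j.castSucc)).card := by
  rw [← Fintype.card_piFinset]
  exact card_le_card_of_injOn _
    (fun _ hx => Fintype.mem_piFinset.2 fun _ => mem_image_of_mem _ hx) (injOn_phiTen_slice F r)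

theorem card_eq_sum_card_slice :
    F.card = ∑ r ∈ F.image (· (Fin.last N)), (slice F r).card :=
  card_eq_sum_card_image _ F

theorem card_image_phiMat_eq_sum (j : Fin N) :
    (F.image (phiMat N j)).card
      = ∑ r ∈ F.image (· (Fin.last N)), ((slice F r).image (· j.castSucc)).card := by
  rw [card_eq_sum_card_image Prod.snd, image_image]
  refine sum_congr rfl fun r _ => ?_
  rw [filter_image]
  change (image (phiMat N j) (slice F r)).card = _
  rw [← card_image_of_injective _ (Prod.mk_left_injective (α := ℤ) r), image_image]
  refine congrArg card (image_congr fun x hx => ?_)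
  simp [phiMat, (mem_filter.1 hx).2]

end MTTKRP

theorem stmt_8_general (N : ℕ) (hN : 2 ≤ N) (T : ℝ)
    (F : Finset (Fin (N + 1) → ℤ))
    (h : ((F.image (phiTen N)).card : ℝ) ≤ T) :
    (F.card : ℝ) ^ (N : ℝ) / T ^ ((N : ℝ) - 1)
      ≤ ∏ j : Fin N, ((F.image (phiMat N j)).card : ℝ) := by
  have hT : 0 ≤ T := (Nat.cast_nonneg _).trans h
  have hslice_le_T (r : ℤ) : ((MTTKRP.slice F r).card : ℝ) ≤ T :=
    (Nat.cast_le.2 (MTTKRP.card_slice_le_card_image_phiTen F r)).trans h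
  have hslice_le_prod (r : ℤ) : ((MTTKRP.slice F r).card : ℝ)
      ≤ ∏ j : Fin N, (((MTTKRP.slice F r).image (· j.castSucc)).card : ℝ) := by
    exact_mod_cast MTTKRP.card_slice_le_prod_card_image F r
  refine div_le_of_le_mul₀ (Real.rpow_nonneg hT _) (by positivity) ?_
  simp only [Real.rpow_natCast, MTTKRP.card_eq_sum_card_slice F,
    MTTKRP.card_image_phiMat_eq_sum F]
  push_cast
  exact sum_pow_le_prod_sum_mul_rpow _ (by omega) hT _ _ (fun _ => by positivity)
    (fun _ _ => by positivity) (fun r _ => hslice_le_T r) (fun r _ => hslice_le_prod r)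

/-- Rectangular case: if `|φ_{N+1}(F)| ≤ T` then
`∏_{j=1}^{N} |φ_j(F)| ≥ |F|^N / T^{N-1}`. -/
theorem stmt_8 (N : ℕ) (hN : 2 ≤ N) (T : ℝ) (hT : 0 < T)
    (F : Finset (Fin (N + 1) → ℤ))
    (h : ((F.image (phiTen N)).card : ℝ) ≤ T) :
    (F.card : ℝ) ^ (N : ℝ) / T ^ ((N : ℝ) - 1)
      ≤ ∏ j : Fin N, ((F.image (phiMat N j)).card : ℝ) :=
  stmt_8_general N hN T F h
end

section
/- Let N ≥ 2 be an integer and T > 0 a real number. If a finite set F ⊆ ℤ^{N+1} satisfies |φ_{N+1}(F)| ≤ T, then ∑_{j=1}^{N} |φ_j(F)| ≥ N·|F| / T^{(N−1)/N}. -/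
open Finset

theorem Real.le_rpow_mul_rpow_of_add_eq_one {c T p q : ℝ} (hc : 0 ≤ c) (hcT : c ≤ T)
    (hq : 0 ≤ q) (hpq : p + q = 1) : c ≤ c ^ p * T ^ q :=
  calc c = c ^ p * c ^ q := by rw [← Real.rpow_add' hc (by simp [hpq]), hpq, Real.rpow_one]
    _ ≤ c ^ p * T ^ q := by gcongr

theorem Real.mul_div_rpow_le_sum_of_le_prod {ι : Type*} [Fintype ι] {c T : ℝ} {a : ι → ℝ}
    (ha : ∀ i, 0 ≤ a i) (hc : 0 ≤ c) (hcT : c ≤ T) (hca : c ≤ ∏ i, a i) :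
    (Fintype.card ι : ℝ) * c / T ^ (((Fintype.card ι : ℝ) - 1) / Fintype.card ι)
      ≤ ∑ i, a i := by
  rcases isEmpty_or_nonempty ι with hι | hι
  · simp
  set n := Fintype.card ι
  rcases hc.eq_or_lt with rfl | hc_pos
  · simpa using sum_nonneg fun i _ => ha i
  have hn : (1 : ℝ) ≤ n := by exact_mod_cast Fintype.card_pos
  have hTe : 0 < T ^ (((n : ℝ) - 1) / n) := Real.rpow_pos_of_pos (hc_pos.trans_le hcT) _
  have amgm : (∏ i, a i) ^ (n : ℝ)⁻¹ ≤ (∑ i, a i) / n := by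
    simpa using Real.geom_mean_le_arith_mean univ (fun _ => 1) a (by simp)
      (by simpa using Fintype.card_pos) (fun i _ => ha i)
  rw [div_le_iff₀ hTe]
  calc (n : ℝ) * c
      ≤ n * (c ^ (n : ℝ)⁻¹ * T ^ (((n : ℝ) - 1) / n)) := by
        gcongr
        exact Real.le_rpow_mul_rpow_of_add_eq_one hc hcT
          (div_nonneg (sub_nonneg.mpr hn) (by positivity)) (by field_simp; ring)
    _ ≤ n * ((∑ i, a i) / n * T ^ (((n : ℝ) - 1) / n)) := by
        gcongr
        exact (Real.rpow_le_rpow hc hca (by positivity)).trans amgm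
    _ = (∑ i, a i) * T ^ (((n : ℝ) - 1) / n) := by field_simp

theorem Finset.card_le_prod_card_image_eval_s9 {ι : Type*} [Fintype ι] [DecidableEq ι]
    {α : ι → Type*} [∀ i, DecidableEq (α i)] (s : Finset (∀ i, α i)) :
    #s ≤ ∏ i, #(s.image fun x => x i) :=
  calc #s ≤ #(Fintype.piFinset fun i => s.image fun x => x i) :=
        card_le_card fun _ hx => Fintype.mem_piFinset.mpr fun _ => mem_image_of_mem _ hx
    _ = ∏ i, #(s.image fun x => x i) := Fintype.card_piFinset _

theorem Finset.card_image_prodMk_eq_sum {α β γ : Type*} [DecidableEq β] [DecidableEq γ]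
    (s : Finset α) (f : α → β) (g : α → γ) :
    #(s.image fun x => (f x, g x)) = ∑ r ∈ s.image g, #({x ∈ s | g x = r}.image f) := by
  rw [card_eq_sum_card_image Prod.snd, image_image]
  refine sum_congr rfl fun r _ => ?_
  have on_fibre : Set.EqOn (fun x => (f x, g x)) (fun x => (f x, r)) ↑{x ∈ s | g x = r} :=
    fun x hx => congrArg (Prod.mk (f x)) (mem_filter.mp hx).2
  simp only [filter_image]
  rw [image_congr on_fibre]
  simpa only [image_image, Function.comp_def] using
    card_image_of_injective ({x ∈ s | g x = r}.image f) (Prod.mk_left_injective r)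

theorem phiTen_injOn (N : ℕ) (r : ℤ) : Set.InjOn (phiTen N) {x | x (Fin.last N) = r} := by
  intro x hx y hy hxy
  funext i
  induction i using Fin.lastCases with
  | last => exact hx.trans hy.symm
  | cast k => exact congrFun hxy k

theorem card_image_phiTen_filter_last_eq (N : ℕ) (F : Finset (Fin (N + 1) → ℤ)) (r : ℤ) :
    #({x ∈ F | x (Fin.last N) = r}.image (phiTen N)) = #{x ∈ F | x (Fin.last N) = r} :=
  card_image_of_injOn <| (phiTen_injOn N r).mono fun _ hx => (mem_filter.mp hx).2

theorem card_filter_last_eq_le_card_image_phiTen (N : ℕ) (F : Finset (Fin (N + 1) → ℤ))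
    (r : ℤ) :
    #{x ∈ F | x (Fin.last N) = r} ≤ #(F.image (phiTen N)) := by
  rw [← card_image_phiTen_filter_last_eq]
  exact card_le_card (image_subset_image (filter_subset _ _))

theorem card_filter_last_eq_le_prod (N : ℕ) (F : Finset (Fin (N + 1) → ℤ)) (r : ℤ) :
    #{x ∈ F | x (Fin.last N) = r}
      ≤ ∏ j : Fin N, #({x ∈ F | x (Fin.last N) = r}.image fun x => x j.castSucc) := by
  rw [← card_image_phiTen_filter_last_eq]
  simpa only [image_image, Function.comp_def, phiTen] using
    card_le_prod_card_image_eval_s9 ({x ∈ F | x (Fin.last N) = r}.image (phiTen N))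

theorem stmt_9_general (N : ℕ) (T : ℝ)
    (F : Finset (Fin (N + 1) → ℤ))
    (h : ((F.image (phiTen N)).card : ℝ) ≤ T) :
    (N : ℝ) * F.card / T ^ (((N : ℝ) - 1) / N)
      ≤ ∑ j : Fin N, ((F.image (phiMat N j)).card : ℝ) := by
  calc (N : ℝ) * F.card / T ^ (((N : ℝ) - 1) / N)
      = ∑ r ∈ F.image (· (Fin.last N)),
          (N : ℝ) * #{x ∈ F | x (Fin.last N) = r} / T ^ (((N : ℝ) - 1) / N) := by
        rw [card_eq_sum_card_image (· (Fin.last N)) F]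
        push_cast
        rw [mul_sum, sum_div]
    _ ≤ ∑ r ∈ F.image (· (Fin.last N)), ∑ j : Fin N,
          (#({x ∈ F | x (Fin.last N) = r}.image fun x => x j.castSucc) : ℝ) := by
        refine sum_le_sum fun r _ => ?_
        have := Real.mul_div_rpow_le_sum_of_le_prod (fun _ => Nat.cast_nonneg _)
          (Nat.cast_nonneg _)
          ((Nat.cast_le.mpr (card_filter_last_eq_le_card_image_phiTen N F r)).trans h)
          (by exact_mod_cast card_filter_last_eq_le_prod N F r)
        rwa [Fintype.card_fin] at this
    _ = ∑ j : Fin N, ((F.image (phiMat N j)).card : ℝ) := by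
        rw [sum_comm]
        refine sum_congr rfl fun j _ => ?_
        rw [← Nat.cast_sum]
        exact congrArg _ (card_image_prodMk_eq_sum F _ _).symm

/-- Rectangular case, sum form: if `|φ_{N+1}(F)| ≤ T` then
`∑_{j=1}^{N} |φ_j(F)| ≥ N|F| / T^{(N-1)/N}`. -/
theorem stmt_9 (N : ℕ) (hN : 2 ≤ N) (T : ℝ) (hT : 0 < T)
    (F : Finset (Fin (N + 1) → ℤ))
    (h : ((F.image (phiTen N)).card : ℝ) ≤ T) :
    (N : ℝ) * F.card / T ^ (((N : ℝ) - 1) / N)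
      ≤ ∑ j : Fin N, ((F.image (phiMat N j)).card : ℝ) :=
  stmt_9_general N T F h
end

section
/- Let N ≥ 2 be an integer, let α be a real number with 0 < α < 1, and let M be a real number with M ≥ (N·α^{1/N}/(1−α))^{N/(N−1)}. Then the integer b = ⌊(α·M)^{1/N}⌋ satisfies b^N + N·b ≤ M. -/
/-!
Write `x = (αM)^{1/N}` and `C = N α^{1/N} / (1 - α)`, so that `b = ⌊x⌋ ≤ x`. Then `b^N ≤ x^N = αM`,
while `N b ≤ N x = (1 - α) · C M^{1/N}`, and the hypothesis on `M` is exactly `C ≤ M^{(N-1)/N}`,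
i.e. `C M^{1/N} ≤ M`. Adding the two bounds gives `b^N + N b ≤ αM + (1 - α)M = M`.
-/

open Real

theorem Real.floor_rpow_one_div_pow_le {y : ℝ} (hy : 0 ≤ y) {n : ℕ} (hn : n ≠ 0) :
    (⌊y ^ (1 / (n : ℝ))⌋ : ℝ) ^ n ≤ y :=
  calc (⌊y ^ (1 / (n : ℝ))⌋ : ℝ) ^ n ≤ (y ^ (1 / (n : ℝ))) ^ n := by
        gcongr
        exact Int.floor_le _
    _ = y := by rw [one_div, rpow_inv_natCast_pow hy hn]

theorem Real.mul_rpow_one_div_le_of_rpow_le {p C M : ℝ} (hp : 1 < p) (hC : 0 ≤ C)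
    (hM : C ^ (p / (p - 1)) ≤ M) : C * M ^ (1 / p) ≤ M := by
  have hM0 : 0 ≤ M := (rpow_nonneg hC _).trans hM
  have hp0 : p ≠ 0 := by positivity
  have hp1 : p - 1 ≠ 0 := sub_ne_zero.mpr hp.ne'
  have hCM : C ≤ M ^ ((p - 1) / p) := by
    calc C = (C ^ (p / (p - 1))) ^ ((p - 1) / p) := by
          rw [← rpow_mul hC, div_mul_div_cancel₀ hp1, div_self hp0, rpow_one]
      _ ≤ M ^ ((p - 1) / p) := by gcongr
  calc C * M ^ (1 / p) ≤ M ^ ((p - 1) / p) * M ^ (1 / p) := by gcongr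
    _ = M := by
      have hsum : (p - 1) / p + 1 / p = 1 := by field_simp; ring
      rw [← rpow_add' hM0 (by rw [hsum]; exact one_ne_zero), hsum, rpow_one]

/-- Validity of the block size `b = ⌊(αM)^{1/N}⌋` for the sequential blocked MTTKRP
algorithm: if `M ≥ (Nα^{1/N}/(1-α))^{N/(N-1)}` then `b^N + Nb ≤ M`. -/
theorem stmt_12 (N : ℕ) (hN : 2 ≤ N) (α : ℝ) (hα0 : 0 < α) (hα1 : α < 1)
    (M : ℝ)
    (hM : ((N : ℝ) * α ^ (1 / (N : ℝ)) / (1 - α)) ^ ((N : ℝ) / ((N : ℝ) - 1)) ≤ M) :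
    (⌊(α * M) ^ (1 / (N : ℝ))⌋ : ℝ) ^ N
      + (N : ℝ) * (⌊(α * M) ^ (1 / (N : ℝ))⌋ : ℝ) ≤ M := by
  have hN1 : (1 : ℝ) < N := by exact_mod_cast hN
  have h1α : 0 < 1 - α := sub_pos.mpr hα1
  have hC : 0 ≤ (N : ℝ) * α ^ (1 / (N : ℝ)) / (1 - α) := by positivity
  have hM0 : 0 ≤ M := (rpow_nonneg hC _).trans hM
  have hpow := floor_rpow_one_div_pow_le (mul_nonneg hα0.le hM0) (n := N) (by omega)
  have hlin : (N : ℝ) * ⌊(α * M) ^ (1 / (N : ℝ))⌋ ≤ (1 - α) * M :=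
    calc (N : ℝ) * ⌊(α * M) ^ (1 / (N : ℝ))⌋ ≤ N * (α * M) ^ (1 / (N : ℝ)) := by
          gcongr; exact Int.floor_le _
      _ = (1 - α) * ((N : ℝ) * α ^ (1 / (N : ℝ)) / (1 - α) * M ^ (1 / (N : ℝ))) := by
          rw [mul_rpow hα0.le hM0]; field_simp
      _ ≤ (1 - α) * M := by gcongr; exact mul_rpow_one_div_le_of_rpow_le hN1 hC hM
  linarith
end

section
/- Let N ≥ 1 be an integer, let γ be a real number with γ > 1 + 1/N, let b be a positive integer, and let I_1,…,I_N be positive integers such that b ≤ ((γ·N/(N+1))^{1/N} − 1)·I_k for every k ∈ {1,…,N}. Then ∏_{k=1}^{N} ⌈I_k/b⌉ ≤ γ·(N/(N+1))·(∏_{k=1}^{N} I_k)/b^N. -/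
/-!
With `r = (γN/(N+1))^{1/N}` the hypothesis says `b ≤ (r - 1) I_k`, hence
`⌈I_k/b⌉ < I_k/b + 1 ≤ r I_k/b`. Multiplying over `k` gives `r^N ∏ I_k / b^N`, and
`r^N = γN/(N+1)` since `γ > 0`, so the real power is an honest `N`-th root.
-/

theorem Int.ceil_div_le_mul_div_of_le_sub_one_mul {a b r : ℝ} (hb : 0 < b)
    (hba : b ≤ (r - 1) * a) : (⌈a / b⌉ : ℝ) ≤ r * a / b :=
  calc (⌈a / b⌉ : ℝ) ≤ a / b + 1 := (Int.ceil_lt_add_one _).le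
    _ = (a + b) / b := by field_simp
    _ ≤ r * a / b := by gcongr; linarith

theorem Finset.prod_ceil_div_le {ι : Type*} [Fintype ι] {a : ι → ℝ} {b r : ℝ}
    (ha : ∀ k, 0 ≤ a k) (hb : 0 < b) (hba : ∀ k, b ≤ (r - 1) * a k) :
    ∏ k, (⌈a k / b⌉ : ℝ) ≤ r ^ Fintype.card ι * (∏ k, a k) / b ^ Fintype.card ι :=
  calc ∏ k, (⌈a k / b⌉ : ℝ)
      ≤ ∏ k, r * a k / b := Finset.prod_le_prod
        (fun k _ => by exact_mod_cast Int.ceil_nonneg (div_nonneg (ha k) hb.le))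
        (fun k _ => Int.ceil_div_le_mul_div_of_le_sub_one_mul hb (hba k))
    _ = r ^ Fintype.card ι * (∏ k, a k) / b ^ Fintype.card ι := by
      simp only [Finset.prod_div_distrib, Finset.prod_mul_distrib, Finset.prod_const,
        Finset.card_univ]

theorem stmt_14_general (N : ℕ) (hN : 1 ≤ N) (γ : ℝ) (hγ : 1 + 1 / (N : ℝ) < γ)
    (b : ℕ) (hb : 0 < b) (I : Fin N → ℕ)
    (hbI : ∀ k, (b : ℝ) ≤ ((γ * N / ((N : ℝ) + 1)) ^ (1 / (N : ℝ)) - 1) * I k) :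
    (∏ k, (⌈(I k : ℝ) / b⌉ : ℝ))
      ≤ γ * ((N : ℝ) / ((N : ℝ) + 1)) * (∏ k, (I k : ℝ)) / (b : ℝ) ^ N := by
  have hγ0 : 0 ≤ γ := by linarith [show 0 ≤ 1 / (N : ℝ) by positivity]
  have hroot : ((γ * N / ((N : ℝ) + 1)) ^ (1 / (N : ℝ))) ^ N = γ * N / ((N : ℝ) + 1) := by
    rw [one_div]
    exact Real.rpow_inv_natCast_pow (by positivity) (by omega)
  calc (∏ k, (⌈(I k : ℝ) / b⌉ : ℝ))
      ≤ ((γ * N / ((N : ℝ) + 1)) ^ (1 / (N : ℝ))) ^ N * (∏ k, (I k : ℝ)) / (b : ℝ) ^ N := by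
        simpa only [Fintype.card_fin] using
          Finset.prod_ceil_div_le (fun k => Nat.cast_nonneg (I k)) (by exact_mod_cast hb) hbI
    _ = γ * ((N : ℝ) / ((N : ℝ) + 1)) * (∏ k, (I k : ℝ)) / (b : ℝ) ^ N := by
        rw [hroot]; ring

/-- Bound on the number of blocks: if `b ≤ ((γN/(N+1))^{1/N} - 1) I_k` for all `k`,
then `∏_k ⌈I_k/b⌉ ≤ γ (N/(N+1)) (∏_k I_k)/b^N`. -/
theorem stmt_14 (N : ℕ) (hN : 1 ≤ N) (γ : ℝ) (hγ : 1 + 1 / (N : ℝ) < γ)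
    (b : ℕ) (hb : 0 < b) (I : Fin N → ℕ) (hI : ∀ k, 0 < I k)
    (hbI : ∀ k, (b : ℝ) ≤ ((γ * N / ((N : ℝ) + 1)) ^ (1 / (N : ℝ)) - 1) * I k) :
    (∏ k, (⌈(I k : ℝ) / b⌉ : ℝ))
      ≤ γ * ((N : ℝ) / ((N : ℝ) + 1)) * (∏ k, (I k : ℝ)) / (b : ℝ) ^ N :=
  stmt_14_general N hN γ hγ b hb I hbI
end
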